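/- Let E ∈ ℝ^{N×N} be a matrix with nonnegative entries and zero diagonal (an adjacency matrix), let D = diag(d_1, …, d_N) with d_i = Σ_j E_{ij}, let L = D − E be the graph Laplacian, and let G = diag(g_1, …, g_N) with all g_i ≥ 0. Suppose there exists a root index r such that g_r > 0 and every index i ∈ {1, …, N} is reachable from r along directed edges, i.e., i is related to r by the reflexive-transitive closure of the relation (j → i whenever E_{ij} > 0). Then the pinned Laplacian L + G is nonsingular, and every complex eigenvalue λ of L + G satisfies Re(λ) > 0. -/

import Mathlib

/-!
Let `v` be an eigenvector of `L + G` for an eigenvalue `μ` with `Re μ ≤ 0`, and let `i` be a node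
where `‖v i‖` is maximal. Row `i` reads `(d i + g i - μ) v i = ∑ j, E i j v j`, and the triangle
inequality gives `(d i + g i - Re μ) ‖v i‖ ≤ ∑ j, E i j ‖v j‖ ≤ d i ‖v i‖`. Hence `g i = 0` and every
in-neighbour of `i` is again of maximal modulus. Following the edges backwards from a node of
maximal modulus reaches the root `r`, so `g r = 0`, a contradiction. Nonsingularity is the case
`μ = 0`.
-/

open Matrix

theorem Matrix.isUnit_of_isUnit_map {ι K L : Type*} [Fintype ι] [DecidableEq ι] [Field K] [Field L]
    (f : K →+* L) {A : Matrix ι ι K} (h : IsUnit (A.map f)) : IsUnit A := by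
  rw [isUnit_iff_isUnit_det, isUnit_iff_ne_zero] at h ⊢
  rw [← RingHom.mapMatrix_apply, ← RingHom.map_det] at h
  exact fun hA => h (by simp [hA])

theorem Matrix.exists_mulVec_eq_smul_of_mem_spectrum {ι K : Type*} [Fintype ι] [DecidableEq ι]
    [Field K] {A : Matrix ι ι K} {μ : K}
    (h : μ ∈ spectrum K A) : ∃ v ≠ 0, A *ᵥ v = μ • v := by
  rw [← spectrum_toLin', ← Module.End.hasEigenvalue_iff_mem_spectrum] at h
  obtain ⟨v, hv⟩ := h.exists_hasEigenvector
  exact ⟨v, hv.2, by simpa using hv.apply_eq_smul⟩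

theorem Complex.eq_zero_and_norm_eq_of_mul_eq_sum {ι : Type*} [Fintype ι] {w : ι → ℝ}
    (hw : ∀ j, 0 ≤ w j) {c : ℝ} (hc : 0 ≤ c) {μ : ℂ} (hμ : μ.re ≤ 0) {v : ι → ℂ} {x : ℂ}
    (hx : x ≠ 0) (hmax : ∀ j, ‖v j‖ ≤ ‖x‖)
    (heq : ((∑ j, w j + c : ℝ) - μ) * x = ∑ j, (w j : ℂ) * v j) :
    c = 0 ∧ ∀ j, 0 < w j → ‖v j‖ = ‖x‖ := by
  have hle : ∀ j ∈ Finset.univ, w j * ‖v j‖ ≤ w j * ‖x‖ :=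
    fun j _ => mul_le_mul_of_nonneg_left (hmax j) (hw j)
  have hlower : (∑ j, w j + c - μ.re) * ‖x‖ ≤ ∑ j, w j * ‖v j‖ :=
    calc (∑ j, w j + c - μ.re) * ‖x‖ ≤ ‖((∑ j, w j + c : ℝ) - μ : ℂ)‖ * ‖x‖ := by
          gcongr
          simpa using Complex.re_le_norm ((∑ j, w j + c : ℝ) - μ : ℂ)
      _ = ‖∑ j, (w j : ℂ) * v j‖ := by rw [← norm_mul, heq]
      _ ≤ ∑ j, w j * ‖v j‖ := by
          refine (norm_sum_le _ _).trans_eq (Finset.sum_congr rfl fun j _ => ?_)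
          rw [norm_mul, Complex.norm_real, Real.norm_of_nonneg (hw j)]
  have hupper : ∑ j, w j * ‖v j‖ ≤ ∑ j, w j * ‖x‖ := Finset.sum_le_sum hle
  have hslack : c - μ.re ≤ 0 := by
    have := hlower.trans hupper
    rw [← Finset.sum_mul] at this
    nlinarith [norm_pos_iff.mpr hx]
  have hc0 : c = 0 := by linarith
  have hμ0 : μ.re = 0 := by linarith
  refine ⟨hc0, fun j hj => ?_⟩
  have hsum : ∑ j, w j * ‖v j‖ = ∑ j, w j * ‖x‖ :=
    le_antisymm hupper (by simpa [hc0, hμ0, Finset.sum_mul] using hlower)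
  exact mul_left_cancel₀ hj.ne' ((Finset.sum_eq_sum_iff_of_le hle).mp hsum j (Finset.mem_univ j))

section PinnedLaplacian

variable {ι : Type*} [Fintype ι] [DecidableEq ι]

def pinnedLaplacian (E : Matrix ι ι ℝ) (g : ι → ℝ) : Matrix ι ι ℝ :=
  diagonal (fun i => ∑ j, E i j) - E + diagonal g

theorem pinnedLaplacian_map_mulVec_apply (E : Matrix ι ι ℝ) (g : ι → ℝ) (v : ι → ℂ) (i : ι) :
    ((pinnedLaplacian E g).map Complex.ofReal *ᵥ v) i
      = ((∑ j, E i j + g i : ℝ) : ℂ) * v i - ∑ j, (E i j : ℂ) * v j := by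
  change (Complex.ofRealHom.mapMatrix (pinnedLaplacian E g) *ᵥ v) i = _
  simp only [pinnedLaplacian, map_add, map_sub, RingHom.mapMatrix_apply,
    diagonal_map (map_zero Complex.ofRealHom), add_mulVec, sub_mulVec, Pi.add_apply, Pi.sub_apply,
    mulVec_diagonal]
  simp only [map_sum, Complex.ofRealHom_eq_coe, mulVec, dotProduct, map_apply, Complex.ofReal_add,
    Complex.ofReal_sum]
  ring

theorem re_pos_of_mem_spectrum_pinnedLaplacian {E : Matrix ι ι ℝ} (hE : ∀ i j, 0 ≤ E i j)
    {g : ι → ℝ} (hg : ∀ i, 0 ≤ g i) {r : ι} (hr : 0 < g r)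
    (hreach : ∀ i, Relation.ReflTransGen (fun a b => 0 < E b a) r i)
    {μ : ℂ} (hμ : μ ∈ spectrum ℂ ((pinnedLaplacian E g).map Complex.ofReal)) : 0 < μ.re := by
  by_contra! hre
  obtain ⟨v, hv0, hv⟩ := exists_mulVec_eq_smul_of_mem_spectrum hμ
  obtain ⟨i₀, -, hi₀⟩ := Finset.exists_max_image Finset.univ (fun i => ‖v i‖) ⟨r, Finset.mem_univ r⟩
  have hm : 0 < ‖v i₀‖ := by
    obtain ⟨j, hj⟩ := Function.ne_iff.mp hv0
    exact (norm_pos_iff.mpr hj).trans_le (hi₀ j (Finset.mem_univ j))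
  have hmaxRow : ∀ i, ‖v i‖ = ‖v i₀‖ → g i = 0 ∧ ∀ j, 0 < E i j → ‖v j‖ = ‖v i₀‖ := by
    intro i hi
    have hrow : ((∑ j, E i j + g i : ℝ) - μ) * v i = ∑ j, (E i j : ℂ) * v j := by
      have := congr_fun hv i
      rw [pinnedLaplacian_map_mulVec_apply, Pi.smul_apply, smul_eq_mul] at this
      linear_combination this
    rw [← hi]
    exact Complex.eq_zero_and_norm_eq_of_mul_eq_sum (hE i) (hg i) hre
      (norm_pos_iff.mp (hi ▸ hm)) (fun j => hi ▸ hi₀ j (Finset.mem_univ j)) hrow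
  have hroot : ∀ i, Relation.ReflTransGen (fun a b => 0 < E b a) r i →
      ‖v i‖ = ‖v i₀‖ → ‖v r‖ = ‖v i₀‖ := by
    intro i h
    induction h with
    | refl => exact id
    | tail _ hedge ih => exact fun hc => ih ((hmaxRow _ hc).2 _ hedge)
  exact hr.ne' (hmaxRow r (hroot i₀ (hreach i₀) rfl)).1

end PinnedLaplacian

theorem pinnedLaplacian_nonsingular_and_spectrum_pos_general {N : ℕ}
    (E : Matrix (Fin N) (Fin N) ℝ)
    (hE_nonneg : ∀ i j, 0 ≤ E i j)
    (g : Fin N → ℝ) (hg : ∀ i, 0 ≤ g i)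
    (L : Matrix (Fin N) (Fin N) ℝ)
    (hL : L = Matrix.diagonal (fun i => ∑ j, E i j) - E)
    (G : Matrix (Fin N) (Fin N) ℝ) (hG : G = Matrix.diagonal g)
    (r : Fin N) (hr : 0 < g r)
    (hreach : ∀ i : Fin N, Relation.ReflTransGen (fun a b => 0 < E b a) r i) :
    IsUnit (L + G) ∧
      ∀ lam ∈ spectrum ℂ ((L + G).map (Complex.ofReal)), 0 < lam.re := by
  subst hL hG
  have hspec : ∀ lam ∈ spectrum ℂ ((pinnedLaplacian E g).map Complex.ofReal), 0 < lam.re :=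
    fun _ => re_pos_of_mem_spectrum_pinnedLaplacian hE_nonneg hg hr hreach
  refine ⟨Matrix.isUnit_of_isUnit_map Complex.ofRealHom ?_, hspec⟩
  exact (spectrum.zero_notMem_iff ℂ).mp fun h0 => (hspec 0 h0).ne rfl

/-- **Pinned Laplacian nonsingularity** (Lemma 1 of the paper).
For a weighted digraph on `N` nodes with nonnegative adjacency matrix `E`
(zero diagonal), Laplacian `L = D − E` with `D = diag(row sums)`, and nonnegative
pinning gains `g` such that some root `r` has `g r > 0` and every node is
reachable from `r` along directed edges (`E i j > 0` meaning an edge from `j`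
into `i`), the pinned Laplacian `L + G` is nonsingular and all of its complex
eigenvalues have positive real part. -/
theorem pinnedLaplacian_nonsingular_and_spectrum_pos {N : ℕ}
    (E : Matrix (Fin N) (Fin N) ℝ)
    (hE_nonneg : ∀ i j, 0 ≤ E i j) (hE_diag : ∀ i, E i i = 0)
    (g : Fin N → ℝ) (hg : ∀ i, 0 ≤ g i)
    (L : Matrix (Fin N) (Fin N) ℝ)
    (hL : L = Matrix.diagonal (fun i => ∑ j, E i j) - E)
    (G : Matrix (Fin N) (Fin N) ℝ) (hG : G = Matrix.diagonal g)
    (r : Fin N) (hr : 0 < g r)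
    (hreach : ∀ i : Fin N, Relation.ReflTransGen (fun a b => 0 < E b a) r i) :
    IsUnit (L + G) ∧
      ∀ lam ∈ spectrum ℂ ((L + G).map (Complex.ofReal)), 0 < lam.re :=
  pinnedLaplacian_nonsingular_and_spectrum_pos_general E hE_nonneg g hg L hL G hG r hr hreach
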